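/- Let g, g̃ ∈ ℝ^{r−1} with δ := g − g̃ and ‖δ‖₂ ≤ ε, let Θ̃ = {R̃, M̃, Ñ, L̃} satisfy the SLS constraints for the estimated plant (Z, e₁, g̃ᵀ), and suppose α > 0 satisfies εα‖Ñ‖ + ‖[1 + g̃ᵀÑ; L̃]‖ ≤ α (which implies ε‖Ñ‖ < 1 and hence ‖Ñδᵀ‖ < 1). Let Θ̂ be the perturbed response [[R̂, N̂],[M̂, L̂]] = [[R̃, Ñ],[M̃, L̃]] + (1 − δᵀÑ)⁻¹·[Ñδᵀ; L̃δᵀ]·[R̃, Ñ]. Then J(g, Θ̂) ≤ J(g̃, Θ̃) + εα‖R̃B₁ + ÑD₂₁‖ = Q(g̃, Θ̃, α). -/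

import Mathlib

/- Preliminaries: transfer functions as real rational functions, RH∞, H∞ norms,
   System-Level Synthesis (SLS) constraints, controllers, closed-loop responses,
   coarse-grained identification, Gaussian vectors. -/

noncomputable section
open scoped Matrix BigOperators ENNReal
open MeasureTheory ProbabilityTheory Polynomial

namespace SLS

/-- Scalar transfer functions: real rational functions in `z`. -/
abbrev TF : Type := RatFunc ℝ

/-- Transfer matrices. -/
abbrev TMat (m n : ℕ) : Type := Matrix (Fin m) (Fin n) TF

/-- Embed a real matrix as a (constant) transfer matrix. -/
def rmap {m n : ℕ} (A : Matrix (Fin m) (Fin n) ℝ) : TMat m n := A.map RatFunc.C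

/-- Evaluate a scalar transfer function at a complex point. -/
def evalTF (f : TF) (z : ℂ) : ℂ :=
  (f.num.map (algebraMap ℝ ℂ)).eval z / (f.denom.map (algebraMap ℝ ℂ)).eval z

/-- Evaluate a transfer matrix at a complex point. -/
def evalMat {m n : ℕ} (F : TMat m n) (z : ℂ) : Matrix (Fin m) (Fin n) ℂ :=
  Matrix.of fun i j => evalTF (F i j) z

/-- Spectral norm (ℓ2 → ℓ2 operator norm) of a matrix over `ℝ` or `ℂ`. -/
def specNorm {𝕜 : Type} [RCLike 𝕜] {m n : ℕ} (M : Matrix (Fin m) (Fin n) 𝕜) : ℝ :=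
  ‖LinearMap.toContinuousLinearMap (Matrix.toEuclideanLin M)‖

/-- H∞ norm of a transfer matrix: sup over the unit circle of the spectral norm. -/
def hinfNorm {m n : ℕ} (F : TMat m n) : ℝ :=
  sSup {x : ℝ | ∃ z : ℂ, ‖z‖ = 1 ∧ x = specNorm (evalMat F z)}

/-- H∞ norm of a scalar transfer function. -/
def hinfNormTF (f : TF) : ℝ :=
  sSup {x : ℝ | ∃ z : ℂ, ‖z‖ = 1 ∧ x = ‖evalTF f z‖}

/-- A scalar transfer function is proper if its numerator degree does not exceed
its denominator degree. -/
def ProperTF (f : TF) : Prop := f.num.degree ≤ f.denom.degree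

/-- Strictly proper: vanishes at `z = ∞`. -/
def StrictlyProperTF (f : TF) : Prop := f.num.degree < f.denom.degree

/-- Stable: all poles lie strictly inside the open unit disk. -/
def StableTF (f : TF) : Prop :=
  ∀ z : ℂ, (f.denom.map (algebraMap ℝ ℂ)).eval z = 0 → ‖z‖ < 1

/-- Membership in RH∞ for scalar transfer functions: proper and stable. -/
def MemRHinfTF (f : TF) : Prop := ProperTF f ∧ StableTF f

/-- Membership in RH∞ for transfer matrices (entrywise). -/
def MemRHinf {m n : ℕ} (F : TMat m n) : Prop := ∀ i j, MemRHinfTF (F i j)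

/-- Strict properness of a transfer matrix (entrywise). -/
def StrictlyProper {m n : ℕ} (F : TMat m n) : Prop := ∀ i j, StrictlyProperTF (F i j)

/-- The transfer matrix `zI - A` for a real matrix `A`. -/
def zIA {n : ℕ} (A : Matrix (Fin n) (Fin n) ℝ) : TMat n n :=
  Matrix.diagonal (fun _ => (RatFunc.X : TF)) - rmap A

/-- A system response `Θ = {R, M, N, L}` for a plant with `n` states, `p` control
inputs and `q` measured outputs. -/
structure Response (n p q : ℕ) where
  R : TMat n n
  M : TMat p n
  N : TMat n q
  L : TMat p q

/-- The stability part of the SLS constraints: `R, M, N` strictly proper in RH∞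
and `L ∈ RH∞`. -/
def SLSStable {n p q : ℕ} (Θ : Response n p q) : Prop :=
  StrictlyProper Θ.R ∧ StrictlyProper Θ.M ∧ StrictlyProper Θ.N ∧
  MemRHinf Θ.R ∧ MemRHinf Θ.M ∧ MemRHinf Θ.N ∧ MemRHinf Θ.L

/-- The SLS constraints for the plant `(A, B₂, C₂)`:
`[zI − A, −B₂]·[[R, N],[M, L]] = [I, 0]`, `[[R, N],[M, L]]·[zI − A; −C₂] = [I; 0]`,
written blockwise, together with the stability conditions. -/
def SLSConstraints {n p q : ℕ} (A : Matrix (Fin n) (Fin n) ℝ)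
    (B₂ : Matrix (Fin n) (Fin p) ℝ) (C₂ : Matrix (Fin q) (Fin n) ℝ)
    (Θ : Response n p q) : Prop :=
  zIA A * Θ.R - rmap B₂ * Θ.M = 1 ∧
  zIA A * Θ.N - rmap B₂ * Θ.L = 0 ∧
  Θ.R * zIA A - Θ.N * rmap C₂ = 1 ∧
  Θ.M * zIA A - Θ.L * rmap C₂ = 0 ∧
  SLSStable Θ

/-- The robust SLS constraints with perturbations `(Δ₁, Δ₂)`: the second block
equation becomes `[[R, N],[M, L]]·[zI − A; −C₂] = [I + Δ₁; Δ₂]`. -/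
def RobustSLSConstraints {n p q : ℕ} (A : Matrix (Fin n) (Fin n) ℝ)
    (B₂ : Matrix (Fin n) (Fin p) ℝ) (C₂ : Matrix (Fin q) (Fin n) ℝ)
    (Δ₁ : TMat n n) (Δ₂ : TMat p n) (Θ : Response n p q) : Prop :=
  zIA A * Θ.R - rmap B₂ * Θ.M = 1 ∧
  zIA A * Θ.N - rmap B₂ * Θ.L = 0 ∧
  Θ.R * zIA A - Θ.N * rmap C₂ = 1 + Δ₁ ∧
  Θ.M * zIA A - Θ.L * rmap C₂ = Δ₂ ∧
  SLSStable Θ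

/-- The controller `K = L − M R⁻¹ N` induced by a system response. -/
def controller {n p q : ℕ} (Θ : Response n p q) : TMat p q :=
  Θ.L - Θ.M * Θ.R⁻¹ * Θ.N

/-- `K` achieves the closed-loop response `Θ'` on the plant `(A, B₂, C₂)`: in the
feedback loop `x = (zI − A)⁻¹(B₂u + δx)`, `y = C₂x + δy`, `u = Ky`, the transfer
matrices from `(δx, δy)` to `(x, u)` equal `[[R', N'],[M', L']]`. -/
def Achieves {n p q : ℕ} (A : Matrix (Fin n) (Fin n) ℝ)
    (B₂ : Matrix (Fin n) (Fin p) ℝ) (C₂ : Matrix (Fin q) (Fin n) ℝ)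
    (K : TMat p q) (Θ' : Response n p q) : Prop :=
  zIA A * Θ'.R = rmap B₂ * Θ'.M + 1 ∧
  zIA A * Θ'.N = rmap B₂ * Θ'.L ∧
  Θ'.M = K * rmap C₂ * Θ'.R ∧
  Θ'.L = K * rmap C₂ * Θ'.N + K

/-- `K` internally stabilizes the plant `(A, B₂, C₂)`: the four closed-loop
transfer matrices exist, `R', M', N'` are strictly proper, and all four lie in RH∞. -/
def InternallyStabilizes {n p q : ℕ} (A : Matrix (Fin n) (Fin n) ℝ)
    (B₂ : Matrix (Fin n) (Fin p) ℝ) (C₂ : Matrix (Fin q) (Fin n) ℝ)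
    (K : TMat p q) : Prop :=
  ∃ Θ' : Response n p q, Achieves A B₂ C₂ K Θ' ∧ SLSStable Θ'

/-! ### FIR SISO plants -/

/-- The down-shift matrix (ones on the subdiagonal). -/
def shiftMat (n : ℕ) : Matrix (Fin n) (Fin n) ℝ :=
  Matrix.of fun i j => if (i : ℕ) = (j : ℕ) + 1 then 1 else 0

/-- The first standard basis vector, as a column matrix. -/
def e1 (n : ℕ) : Matrix (Fin n) (Fin 1) ℝ :=
  Matrix.of fun i _ => if (i : ℕ) = 0 then 1 else 0

/-- A vector as a row matrix (`gᵀ`). -/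
def rowVec {n : ℕ} (g : Fin n → ℝ) : Matrix (Fin 1) (Fin n) ℝ :=
  Matrix.of fun _ j => g j

/-- The matrix `C₁ = [gᵀ; 0]`. -/
def C1mat {n : ℕ} (g : Fin n → ℝ) : Matrix (Fin 2) (Fin n) ℝ :=
  Matrix.of fun i j => if (i : ℕ) = 0 then g j else 0

/-- The matrix `D₁₂ = [0; 1]`. -/
def D12mat : Matrix (Fin 2) (Fin 1) ℝ :=
  Matrix.of fun i _ => if (i : ℕ) = 1 then 1 else 0

/-- Stack two scalar transfer functions into a 2×1 transfer matrix `[a; b]`. -/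
def col2 (a b : TF) : TMat 2 1 :=
  Matrix.of fun i _ => if (i : ℕ) = 0 then a else b

/-- The H∞ cost `J(g, Θ) = ‖[C₁, D₁₂]·[[R, N],[M, L]]·[B₁; D₂₁] + D₁₁‖` of a
system response for the generalized plant built from FIR coefficients `g`. -/
def cost {n nw : ℕ} (g : Fin n → ℝ) (B₁ : Matrix (Fin n) (Fin nw) ℝ)
    (D₂₁ : Matrix (Fin 1) (Fin nw) ℝ) (D₁₁ : Matrix (Fin 2) (Fin nw) ℝ)
    (Θ : Response n 1 1) : ℝ :=
  hinfNorm ((rmap (C1mat g) * Θ.R + rmap D12mat * Θ.M) * rmap B₁ +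
    (rmap (C1mat g) * Θ.N + rmap D12mat * Θ.L) * rmap D₂₁ + rmap D₁₁)

/-- The transfer matrix `[1 + g̃ᵀÑ; L̃]` and its H∞ norm. -/
def perfWeight {n : ℕ} (g : Fin n → ℝ) (Θ : Response n 1 1) : ℝ :=
  hinfNorm (col2 (1 + (rmap (rowVec g) * Θ.N) 0 0) (Θ.L 0 0))

/-- The robust SLS objective `Q(g̃, Θ̃, α) = J(g̃, Θ̃) + εα‖R̃B₁ + ÑD₂₁‖`. -/
def Qval {n nw : ℕ} (g : Fin n → ℝ) (B₁ : Matrix (Fin n) (Fin nw) ℝ)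
    (D₂₁ : Matrix (Fin 1) (Fin nw) ℝ) (D₁₁ : Matrix (Fin 2) (Fin nw) ℝ)
    (ε : ℝ) (Θ : Response n 1 1) (α : ℝ) : ℝ :=
  cost g B₁ D₂₁ D₁₁ Θ + ε * α * hinfNorm (Θ.R * rmap B₁ + Θ.N * rmap D₂₁)

/-- Feasibility for the robust SLS problem for the estimate `g̃` with uncertainty
parameter `ε`: `α > 0`, `Θ̃` satisfies the SLS constraints for `(Z, e₁, g̃ᵀ)`, and
`εα‖Ñ‖ + ‖[1 + g̃ᵀÑ; L̃]‖ ≤ α`. -/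
def RobustFeasible {n : ℕ} (g : Fin n → ℝ) (ε : ℝ) (Θ : Response n 1 1) (α : ℝ) : Prop :=
  0 < α ∧ SLSConstraints (shiftMat n) (e1 n) (rowVec g) Θ ∧
  ε * α * hinfNorm Θ.N + perfWeight g Θ ≤ α

/-- `(Θ̃, α)` is a minimizer of the robust SLS problem for `g̃`. -/
def RobustOptimal {n nw : ℕ} (g : Fin n → ℝ) (B₁ : Matrix (Fin n) (Fin nw) ℝ)
    (D₂₁ : Matrix (Fin 1) (Fin nw) ℝ) (D₁₁ : Matrix (Fin 2) (Fin nw) ℝ)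
    (ε : ℝ) (Θ : Response n 1 1) (α : ℝ) : Prop :=
  RobustFeasible g ε Θ α ∧
  ∀ Θ' α', RobustFeasible g ε Θ' α' → Qval g B₁ D₂₁ D₁₁ ε Θ α ≤ Qval g B₁ D₂₁ D₁₁ ε Θ' α'

/-- `Θ₀` is a minimizer of `J(g, ·)` over responses satisfying the SLS constraints
for the plant `(Z, e₁, gᵀ)`. -/
def OptimalResponse {n nw : ℕ} (g : Fin n → ℝ) (B₁ : Matrix (Fin n) (Fin nw) ℝ)
    (D₂₁ : Matrix (Fin 1) (Fin nw) ℝ) (D₁₁ : Matrix (Fin 2) (Fin nw) ℝ)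
    (Θ : Response n 1 1) : Prop :=
  SLSConstraints (shiftMat n) (e1 n) (rowVec g) Θ ∧
  ∀ Θ', SLSConstraints (shiftMat n) (e1 n) (rowVec g) Θ' →
    cost g B₁ D₂₁ D₁₁ Θ ≤ cost g B₁ D₂₁ D₁₁ Θ'

/-- The FIR transfer function `G(z) = Σ_{t=1}^{r−1} g_t z^{−t}` for
`g = (g₁, …, g_{r−1})`. -/
def firTF {n : ℕ} (g : Fin n → ℝ) : TF :=
  ∑ t : Fin n, RatFunc.C (g t) * (RatFunc.X)⁻¹ ^ ((t : ℕ) + 1)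

/-- The FIR transfer function `G(z) = Σ_{k=0}^{T−1} g_k z^{−k}` for a full
impulse-response vector `g_{0:T−1}`. -/
def firTF0 {T : ℕ} (g : Fin T → ℝ) : TF :=
  ∑ k : Fin T, RatFunc.C (g k) * (RatFunc.X)⁻¹ ^ (k : ℕ)

/-! ### Coarse-grained identification -/

/-- Euclidean (ℓ2) norm of a finite real vector. -/
def euclNorm {r : ℕ} (x : Fin r → ℝ) : ℝ := Real.sqrt (∑ i, x i ^ 2)

/-- ℓp norm of a finite real vector, `p ∈ [1, ∞]`. -/
def lpNorm {T : ℕ} (p : ℝ≥0∞) (x : Fin T → ℝ) : ℝ :=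
  if p = ∞ then ⨆ i, |x i| else (∑ i, |x i| ^ p.toReal) ^ (1 / p.toReal)

/-- `r^{2/max(p,2)}` as a real number. -/
def rExp (p : ℝ≥0∞) (r : ℕ) : ℝ := (r : ℝ) ^ ((2 / max p 2).toReal)

/-- The T×T lower-triangular Toeplitz matrix whose first column is `u`. -/
def toep {T : ℕ} (u : Fin T → ℝ) : Matrix (Fin T) (Fin T) ℝ :=
  Matrix.of fun i j =>
    if (j : ℕ) ≤ (i : ℕ) then u ⟨(i : ℕ) - (j : ℕ), lt_of_le_of_lt (Nat.sub_le _ _) i.isLt⟩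
    else 0

/-- The stacked input matrix `Z_mat = [Toep(u₁); …; Toep(u_m)]`. -/
def Zmat {T mE : ℕ} (u : Fin mE → Fin T → ℝ) : Matrix (Fin mE × Fin T) (Fin T) ℝ :=
  Matrix.of fun pr j => toep (u pr.1) pr.2 j

/-- `Z_matᵀ Z_mat`. -/
def ZtZ {T mE : ℕ} (u : Fin mE → Fin T → ℝ) : Matrix (Fin T) (Fin T) ℝ :=
  (Zmat u)ᵀ * Zmat u

/-- The least-squares estimate `g̃_{0:T−1} = (Z_matᵀZ_mat)⁻¹Z_matᵀ(y₁; …; y_m)`. -/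
def lsEst {T mE : ℕ} (u : Fin mE → Fin T → ℝ) (y : Fin mE → Fin T → ℝ) : Fin T → ℝ :=
  ((ZtZ u)⁻¹ * (Zmat u)ᵀ).mulVec fun pr => y pr.1 pr.2

/-- Pad the FIR coefficients `g = (g₁, …, g_{r−1})` to the impulse response
`g_{0:T−1} = (0, g₁, …, g_{r−1}, 0, …, 0)`. -/
def pad {r T : ℕ} (_ : r ≤ T) (g : Fin (r - 1) → ℝ) : Fin T → ℝ := fun k =>
  if hk : 1 ≤ (k : ℕ) ∧ (k : ℕ) < r then g ⟨(k : ℕ) - 1, by omega⟩ else 0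

/-- The estimated FIR coefficients `g̃ = (g̃₁, …, g̃_{r−1})` from coarse-grained
identification with true coefficients `g` and additive noise on the outputs. -/
def coarseEst {r T mE : ℕ} (hrT : r ≤ T) (u : Fin mE → Fin T → ℝ)
    (g : Fin (r - 1) → ℝ) (noise : Fin mE → Fin T → ℝ) : Fin (r - 1) → ℝ :=
  fun i =>
    lsEst u (fun k => (toep (u k)).mulVec (pad hrT g) + noise k)
      ⟨(i : ℕ) + 1, by have := i.isLt; omega⟩

/-! ### Gaussian random vectors -/

/-- The standard Gaussian measure on `Fin r → ℝ` (i.i.d. `N(0,1)` coordinates). -/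
def stdGaussianPi (r : ℕ) : Measure (Fin r → ℝ) :=
  Measure.pi fun _ => gaussianReal 0 1

/-- `δ` is a centered Gaussian random vector with covariance `Cov`: its law is the
pushforward of the standard Gaussian under some `A` with `AAᵀ = Cov`. -/
def IsCenteredGaussianVec {Ω : Type} [MeasurableSpace Ω] (P : Measure Ω) {r : ℕ}
    (δ : Ω → Fin r → ℝ) (Cov : Matrix (Fin r) (Fin r) ℝ) : Prop :=
  ∃ A : Matrix (Fin r) (Fin r) ℝ, A * Aᵀ = Cov ∧
    Measure.map δ P = Measure.map (fun x => A.mulVec x) (stdGaussianPi r)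

/-- The law of i.i.d. `N(0, σ²)` noise across `mE` experiments of length `T`. -/
def iidGaussianLaw (mE T : ℕ) (σ2 : ℝ) : Measure (Fin mE → Fin T → ℝ) :=
  Measure.pi fun _ => Measure.pi fun _ => gaussianReal 0 σ2.toNNReal


/-- Scalar multiplication of a transfer matrix by a scalar transfer function. -/
def sMulTF {m n : ℕ} (c : TF) (M : TMat m n) : TMat m n := Matrix.of fun i j => c * M i j

/-- The perturbed response `Θ̂` with `R̂ = (I+Δ₁)⁻¹R̃`, `M̂ = M̃ − Δ₂(I+Δ₁)⁻¹R̃`,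
`N̂ = (I+Δ₁)⁻¹Ñ`, `L̂ = L̃ − Δ₂(I+Δ₁)⁻¹Ñ` (with the rational matrix inverse). -/
def deltaPerturb {n p q : ℕ} (Δ₁ : TMat n n) (Δ₂ : TMat p n) (Θ : Response n p q) :
    Response n p q where
  R := (1 + Δ₁)⁻¹ * Θ.R
  M := Θ.M - Δ₂ * ((1 + Δ₁)⁻¹ * Θ.R)
  N := (1 + Δ₁)⁻¹ * Θ.N
  L := Θ.L - Δ₂ * ((1 + Δ₁)⁻¹ * Θ.N)

/-- The Sherman–Morrison form of the perturbed response in the FIR SISO case: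
`[[R̂, N̂],[M̂, L̂]] = [[R̃, Ñ],[M̃, L̃]] + (1 − δᵀÑ)⁻¹·[Ñδᵀ; L̃δᵀ]·[R̃, Ñ]`. -/
def smPerturb {n : ℕ} (δ : Fin n → ℝ) (Θ : Response n 1 1) : Response n 1 1 where
  R := Θ.R + sMulTF (1 - (rmap (rowVec δ) * Θ.N) 0 0)⁻¹ (Θ.N * rmap (rowVec δ) * Θ.R)
  M := Θ.M + sMulTF (1 - (rmap (rowVec δ) * Θ.N) 0 0)⁻¹ (Θ.L * rmap (rowVec δ) * Θ.R)
  N := Θ.N + sMulTF (1 - (rmap (rowVec δ) * Θ.N) 0 0)⁻¹ (Θ.N * rmap (rowVec δ) * Θ.N)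
  L := Θ.L + sMulTF (1 - (rmap (rowVec δ) * Θ.N) 0 0)⁻¹ (Θ.L * rmap (rowVec δ) * Θ.N)

/-- The block-diagonal matrix with `m` copies of `Toep(g)` on the diagonal
(the action of `Toep(g)` on the stacked process noise of `m` experiments). -/
def bigToep {T mE : ℕ} (g : Fin T → ℝ) : Matrix (Fin mE × Fin T) (Fin mE × Fin T) ℝ :=
  Matrix.of fun pr qr => if pr.1 = qr.1 then toep g pr.2 qr.2 else 0

end SLS

open SLS

/-! Write `δ = g - g̃`, `c = 1 - δᵀÑ` and `Φ = R̃B₁ + ÑD₂₁`. The closed-loop matrix of `Θ̂` for the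
plant `g` is exactly that of `Θ̃` for `g̃` plus `c⁻¹ [1 + g̃ᵀÑ; L̃] δᵀ Φ`. On the unit circle
`|c| ≥ 1 - ε‖Ñ‖`, and the constraint on `α` gives `‖[1 + g̃ᵀÑ; L̃]‖ ≤ α (1 - ε‖Ñ‖) ≤ α |c|`, so the
extra term is bounded by `εα‖Φ‖` pointwise. The factor `1 - ε‖Ñ‖` is positive because
`1 + g̃ᵀÑ` is a nonzero rational function (`g̃ᵀÑ` is strictly proper), so `‖[1 + g̃ᵀÑ; L̃]‖ > 0`. -/

open scoped Matrix.Norms.L2Operator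

namespace SLS

section SpectralNorm

variable {𝕜 : Type} [RCLike 𝕜] {m n : ℕ}

theorem specNorm_eq_norm (A : Matrix (Fin m) (Fin n) 𝕜) : specNorm A = ‖A‖ := rfl

theorem norm_entry_le_l2_opNorm (A : Matrix (Fin m) (Fin n) 𝕜) (i : Fin m) (j : Fin n) :
    ‖A i j‖ ≤ ‖A‖ := by
  have h := A.l2_opNorm_mulVec (EuclideanSpace.single j 1)
  rw [PiLp.norm_single, norm_one, mul_one] at h
  refine le_trans (le_of_eq ?_) ((PiLp.norm_apply_le _ i).trans h)
  simp [Matrix.mulVec_single]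

theorem l2_opNorm_rowVec_map_ofReal (δ : Fin n → ℝ) :
    ‖(rowVec δ).map ((↑) : ℝ → 𝕜)‖ = euclNorm δ := by
  set A := (rowVec δ).map ((↑) : ℝ → 𝕜)
  have hAA : A * Aᴴ = Matrix.diagonal fun _ => ((∑ i, δ i ^ 2 : ℝ) : 𝕜) := by
    ext i j
    fin_cases i; fin_cases j
    simp [A, rowVec, Matrix.mul_apply, sq]
  have h := Aᴴ.l2_opNorm_conjTranspose_mul_self
  rw [Matrix.conjTranspose_conjTranspose, hAA, Matrix.l2_opNorm_diagonal,
    Matrix.l2_opNorm_conjTranspose] at h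
  rw [pi_norm_const, RCLike.norm_ofReal, abs_of_nonneg (by positivity)] at h
  rw [euclNorm, h, Real.sqrt_mul_self (norm_nonneg _)]

end SpectralNorm

section Evaluation

-- Where the denominator vanishes, `evalTF f z` is the junk value `num f (z) / 0 = 0`.
def RegularAt (f : TF) (z : ℂ) : Prop := (f.denom.map (algebraMap ℝ ℂ)).eval z ≠ 0

variable {f g : TF} {z : ℂ}

theorem regularAt_iff_eval₂_denom : RegularAt f z ↔ f.denom.eval₂ (algebraMap ℝ ℂ) z ≠ 0 := by
  rw [Polynomial.eval₂_eq_eval_map, RegularAt]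

theorem evalTF_eq_eval : evalTF f z = RatFunc.eval (algebraMap ℝ ℂ) z f := by
  simp only [evalTF, RatFunc.eval, Polynomial.eval₂_eq_eval_map]

theorem regularAt_of_denom_dvd {p : ℝ[X]} (h : f.denom ∣ p)
    (hp : (p.map (algebraMap ℝ ℂ)).eval z ≠ 0) : RegularAt f z := by
  obtain ⟨q, rfl⟩ := h
  rw [Polynomial.map_mul, Polynomial.eval_mul] at hp
  exact left_ne_zero_of_mul hp

theorem regularAt_C (a : ℝ) : RegularAt (RatFunc.C a) z := by
  simp [RegularAt]

theorem regularAt_one : RegularAt 1 z := by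
  simp [RegularAt]

theorem RegularAt.add (hf : RegularAt f z) (hg : RegularAt g z) : RegularAt (f + g) z :=
  regularAt_of_denom_dvd (RatFunc.denom_add_dvd f g)
    (by rw [Polynomial.map_mul, Polynomial.eval_mul]; exact mul_ne_zero hf hg)

theorem RegularAt.mul (hf : RegularAt f z) (hg : RegularAt g z) : RegularAt (f * g) z :=
  regularAt_of_denom_dvd (RatFunc.denom_mul_dvd f g)
    (by rw [Polynomial.map_mul, Polynomial.eval_mul]; exact mul_ne_zero hf hg)

theorem RegularAt.neg (hf : RegularAt f z) : RegularAt (-f) z := by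
  have h : -f = RatFunc.C (-1) * f := by simp
  exact h ▸ (regularAt_C _).mul hf

theorem RegularAt.sub (hf : RegularAt f z) (hg : RegularAt g z) : RegularAt (f - g) z := by
  simpa only [sub_eq_add_neg] using hf.add hg.neg

theorem regularAt_sum {ι : Type*} (s : Finset ι) {F : ι → TF} (h : ∀ i ∈ s, RegularAt (F i) z) :
    RegularAt (∑ i ∈ s, F i) z :=
  Finset.sum_induction F (RegularAt · z) (fun _ _ => RegularAt.add) (by simp [RegularAt]) h

theorem evalTF_C (a : ℝ) : evalTF (RatFunc.C a) z = a := by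
  simp [evalTF_eq_eval]

theorem evalTF_add (hf : RegularAt f z) (hg : RegularAt g z) :
    evalTF (f + g) z = evalTF f z + evalTF g z := by
  simp only [evalTF_eq_eval]
  exact RatFunc.eval_add _ _ (regularAt_iff_eval₂_denom.1 hf) (regularAt_iff_eval₂_denom.1 hg)

theorem evalTF_mul (hf : RegularAt f z) (hg : RegularAt g z) :
    evalTF (f * g) z = evalTF f z * evalTF g z := by
  simp only [evalTF_eq_eval]
  exact RatFunc.eval_mul _ _ (regularAt_iff_eval₂_denom.1 hf) (regularAt_iff_eval₂_denom.1 hg)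

theorem evalTF_neg (hf : RegularAt f z) : evalTF (-f) z = -evalTF f z := by
  have h : -f = RatFunc.C (-1) * f := by simp
  rw [h, evalTF_mul (regularAt_C _) hf, evalTF_C]
  simp

theorem evalTF_sub (hf : RegularAt f z) (hg : RegularAt g z) :
    evalTF (f - g) z = evalTF f z - evalTF g z := by
  rw [sub_eq_add_neg, evalTF_add hf hg.neg, evalTF_neg hg, sub_eq_add_neg]

theorem evalTF_sum {ι : Type*} (s : Finset ι) {F : ι → TF} (h : ∀ i, RegularAt (F i) z) :
    evalTF (∑ i ∈ s, F i) z = ∑ i ∈ s, evalTF (F i) z := by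
  induction s using Finset.cons_induction with
  | empty => simp [evalTF]
  | cons i s hi ih =>
    rw [Finset.sum_cons, Finset.sum_cons,
      evalTF_add (h i) (regularAt_sum s fun j _ => h j), ih]

theorem regularAt_inv (h : evalTF f z ≠ 0) : RegularAt f⁻¹ z := by
  unfold evalTF at h
  refine regularAt_of_denom_dvd ?_ (div_ne_zero_iff.1 h).1
  have hinv : f⁻¹ = algebraMap _ _ f.denom / algebraMap _ _ f.num := by
    conv_lhs => rw [← RatFunc.num_div_denom f]
    rw [inv_div]
  rw [hinv]
  exact RatFunc.denom_div_dvd _ _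

theorem evalTF_inv (hf : RegularAt f z) (h : evalTF f z ≠ 0) :
    evalTF f⁻¹ z = (evalTF f z)⁻¹ := by
  have hf0 : f ≠ 0 := by rintro rfl; simp [evalTF] at h
  have h1 := evalTF_mul hf (regularAt_inv h)
  rw [mul_inv_cancel₀ hf0, show evalTF 1 z = 1 by simp [evalTF]] at h1
  exact eq_inv_of_mul_eq_one_right h1.symm

end Evaluation

section MatrixEvaluation

variable {m n k : ℕ} {z : ℂ}

def MatRegularAt (F : TMat m n) (z : ℂ) : Prop := ∀ i j, RegularAt (F i j) z

theorem MatRegularAt.add {F G : TMat m n} (hF : MatRegularAt F z) (hG : MatRegularAt G z) :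
    MatRegularAt (F + G) z := fun i j => (hF i j).add (hG i j)

theorem MatRegularAt.mul {F : TMat m n} {G : TMat n k} (hF : MatRegularAt F z)
    (hG : MatRegularAt G z) : MatRegularAt (F * G) z := fun i j => by
  rw [Matrix.mul_apply]
  exact regularAt_sum _ fun l _ => (hF i l).mul (hG l j)

theorem MatRegularAt.smul {c : TF} {F : TMat m n} (hc : RegularAt c z) (hF : MatRegularAt F z) :
    MatRegularAt (c • F) z := fun i j => hc.mul (hF i j)

theorem matRegularAt_rmap (A : Matrix (Fin m) (Fin n) ℝ) : MatRegularAt (rmap A) z :=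
  fun _ _ => regularAt_C _

theorem evalMat_add {F G : TMat m n} (hF : MatRegularAt F z) (hG : MatRegularAt G z) :
    evalMat (F + G) z = evalMat F z + evalMat G z := by
  ext i j
  exact evalTF_add (hF i j) (hG i j)

theorem evalMat_mul {F : TMat m n} {G : TMat n k} (hF : MatRegularAt F z)
    (hG : MatRegularAt G z) : evalMat (F * G) z = evalMat F z * evalMat G z := by
  ext i j
  simp only [evalMat, Matrix.of_apply, Matrix.mul_apply]
  rw [evalTF_sum _ fun l => (hF i l).mul (hG l j)]
  exact Finset.sum_congr rfl fun l _ => evalTF_mul (hF i l) (hG l j)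

theorem evalMat_smul {c : TF} {F : TMat m n} (hc : RegularAt c z) (hF : MatRegularAt F z) :
    evalMat (c • F) z = evalTF c z • evalMat F z := by
  ext i j
  exact evalTF_mul hc (hF i j)

theorem evalMat_rmap (A : Matrix (Fin m) (Fin n) ℝ) :
    evalMat (rmap A) z = A.map ((↑) : ℝ → ℂ) := by
  ext i j
  exact evalTF_C (A i j)

end MatrixEvaluation

section HInfinityNorm

variable {m n : ℕ}

theorem StableTF.regularAt {f : TF} (hf : StableTF f) {z : ℂ} (hz : ‖z‖ = 1) :
    RegularAt f z :=
  fun h => (hf z h).ne hz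

theorem MemRHinf.matRegularAt {F : TMat m n} (hF : MemRHinf F) (z : ℂ) (hz : ‖z‖ = 1) :
    MatRegularAt F z :=
  fun i j => (hF i j).2.regularAt hz

theorem continuousOn_evalMat {F : TMat m n}
    (hF : ∀ z, ‖z‖ = 1 → MatRegularAt F z) :
    ContinuousOn (evalMat F) (Metric.sphere 0 1) := by
  refine continuousOn_pi.2 fun i => continuousOn_pi.2 fun j => ?_
  refine (Polynomial.continuous _).continuousOn.div (Polynomial.continuous _).continuousOn
    fun z hz => hF z (mem_sphere_zero_iff_norm.1 hz) i j

theorem norm_evalMat_le_hinfNorm {F : TMat m n} (hF : ∀ z, ‖z‖ = 1 → MatRegularAt F z)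
    {z : ℂ} (hz : ‖z‖ = 1) : ‖evalMat F z‖ ≤ hinfNorm F := by
  have hset : {x : ℝ | ∃ z : ℂ, ‖z‖ = 1 ∧ x = specNorm (evalMat F z)} =
      (fun z => ‖evalMat F z‖) '' Metric.sphere 0 1 := by
    ext x
    simp [eq_comm, specNorm_eq_norm]
  refine le_csSup ?_ ⟨z, hz, rfl⟩
  rw [hset]
  exact ((isCompact_sphere 0 1).image_of_continuousOn
    (continuous_norm.comp_continuousOn (continuousOn_evalMat hF))).bddAbove

theorem hinfNorm_le {F : TMat m n} {a : ℝ} (h : ∀ z, ‖z‖ = 1 → ‖evalMat F z‖ ≤ a) :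
    hinfNorm F ≤ a :=
  csSup_le ⟨_, 1, norm_one, rfl⟩ fun _ ⟨z, hz, hx⟩ => hx ▸ h z hz

theorem exists_norm_eq_one_evalTF_ne_zero {f : TF} (hf : f ≠ 0) :
    ∃ z : ℂ, ‖z‖ = 1 ∧ evalTF f z ≠ 0 := by
  have hp : (f.num * f.denom).map (algebraMap ℝ ℂ) ≠ 0 :=
    (Polynomial.map_ne_zero_iff (algebraMap ℝ ℂ).injective).2
      (mul_ne_zero (RatFunc.num_ne_zero hf) f.denom_ne_zero)
  have hsphere : (Metric.sphere (0 : ℂ) 1).Infinite :=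
    (isPreconnected_sphere (by simp) 0 1).infinite_of_nontrivial
      ⟨1, by simp, -1, by simp, by norm_num⟩
  obtain ⟨z, hz, hroot⟩ := (hsphere.sdiff (Polynomial.finite_setOfPred_isRoot hp)).nonempty
  simp only [Set.mem_ofPred_eq, Polynomial.IsRoot, Polynomial.map_mul, Polynomial.eval_mul,
    mul_ne_zero_iff] at hroot
  exact ⟨z, mem_sphere_zero_iff_norm.1 hz, div_ne_zero hroot.1 hroot.2⟩

theorem hinfNorm_pos {F : TMat m n} (hF : ∀ z, ‖z‖ = 1 → MatRegularAt F z) {i : Fin m}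
    {j : Fin n} (hij : F i j ≠ 0) : 0 < hinfNorm F := by
  obtain ⟨z, hz, hne⟩ := exists_norm_eq_one_evalTF_ne_zero hij
  calc 0 < ‖evalMat F z i j‖ := norm_pos_iff.2 hne
    _ ≤ ‖evalMat F z‖ := norm_entry_le_l2_opNorm _ i j
    _ ≤ hinfNorm F := norm_evalMat_le_hinfNorm hF hz

end HInfinityNorm

section StrictlyProper

theorem strictlyProperTF_iff {f : TF} : StrictlyProperTF f ↔ f = 0 ∨ f.intDegree < 0 := by
  rcases eq_or_ne f 0 with rfl | hf
  · simp [StrictlyProperTF]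
  have hnum : f.num ≠ 0 := RatFunc.num_ne_zero hf
  rw [StrictlyProperTF, ← Polynomial.natDegree_lt_natDegree_iff hnum, RatFunc.intDegree]
  simp only [hf, false_or]
  omega

def strictlyProperSubmodule : Submodule ℝ TF where
  carrier := {f | StrictlyProperTF f}
  zero_mem' := strictlyProperTF_iff.2 (Or.inl rfl)
  add_mem' {f g} hf hg := by
    rw [Set.mem_ofPred_eq, strictlyProperTF_iff] at *
    by_cases hfg : f + g = 0
    · exact Or.inl hfg
    rcases hg with rfl | hg
    · simpa using hf
    rcases hf with rfl | hf
    · simpa using Or.inr hg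
    refine Or.inr ((RatFunc.intDegree_add_le ?_ hfg).trans_lt (max_lt hf hg))
    rintro rfl
    simp at hg
  smul_mem' a f hf := by
    rw [Set.mem_ofPred_eq, strictlyProperTF_iff] at *
    rcases eq_or_ne a 0 with rfl | ha
    · simp
    rcases hf with rfl | hf
    · simp
    refine Or.inr ?_
    rwa [RatFunc.smul_eq_C_mul, RatFunc.intDegree_mul, RatFunc.intDegree_C, zero_add]
    · exact (_root_.map_ne_zero _).2 ha
    · rintro rfl
      simp at hf

theorem StrictlyProper.rmap_mul {m n k : ℕ} {N : TMat n k} (hN : StrictlyProper N)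
    (A : Matrix (Fin m) (Fin n) ℝ) : StrictlyProper (rmap A * N) := fun i j => by
  have h : (rmap A * N) i j = ∑ l, A i l • N l j := by
    simp [Matrix.mul_apply, rmap, RatFunc.smul_eq_C_mul]
  rw [h]
  exact strictlyProperSubmodule.sum_mem fun l _ => strictlyProperSubmodule.smul_mem _ (hN l j)

theorem not_strictlyProperTF_one : ¬ StrictlyProperTF 1 := by
  simp [StrictlyProperTF]

theorem StrictlyProperTF.one_sub_ne_zero {w : TF} (hw : StrictlyProperTF w) : 1 - w ≠ 0 := by
  rw [sub_ne_zero]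
  rintro rfl
  exact not_strictlyProperTF_one hw

theorem StrictlyProperTF.one_add_ne_zero {w : TF} (hw : StrictlyProperTF w) : 1 + w ≠ 0 := by
  rw [← sub_neg_eq_add]
  exact StrictlyProperTF.one_sub_ne_zero (strictlyProperSubmodule.neg_mem hw)

end StrictlyProper

section CostIdentity

variable {n nw : ℕ}

def costMatrix (g : Fin n → ℝ) (B₁ : Matrix (Fin n) (Fin nw) ℝ)
    (D₂₁ : Matrix (Fin 1) (Fin nw) ℝ) (D₁₁ : Matrix (Fin 2) (Fin nw) ℝ)
    (Θ : Response n 1 1) : TMat 2 nw :=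
  (rmap (C1mat g) * Θ.R + rmap D12mat * Θ.M) * rmap B₁ +
    (rmap (C1mat g) * Θ.N + rmap D12mat * Θ.L) * rmap D₂₁ + rmap D₁₁

theorem cost_eq_hinfNorm_costMatrix (g : Fin n → ℝ) (B₁ : Matrix (Fin n) (Fin nw) ℝ)
    (D₂₁ : Matrix (Fin 1) (Fin nw) ℝ) (D₁₁ : Matrix (Fin 2) (Fin nw) ℝ) (Θ : Response n 1 1) :
    cost g B₁ D₂₁ D₁₁ Θ = hinfNorm (costMatrix g B₁ D₂₁ D₁₁ Θ) := rfl

def perfWeightMatrix (g : Fin n → ℝ) (Θ : Response n 1 1) : TMat 2 1 :=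
  col2 (1 + (rmap (rowVec g) * Θ.N) 0 0) (Θ.L 0 0)

theorem rmap_rowVec_sub (g g' : Fin n → ℝ) :
    rmap (rowVec (g - g')) = rmap (rowVec g) - rmap (rowVec g') := by
  ext i j
  simp [rmap, rowVec]

theorem rmap_C1mat (g : Fin n → ℝ) : rmap (C1mat g) = col2 1 0 * rmap (rowVec g) := by
  ext i j
  fin_cases i <;> simp [Matrix.mul_apply, col2, rmap, C1mat, rowVec]

theorem rmap_C1mat_mul_add_rmap_D12mat_mul (g : Fin n → ℝ) (N : TMat n 1) (L : TMat 1 1) :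
    rmap (C1mat g) * N + rmap D12mat * L = col2 ((rmap (rowVec g) * N) 0 0) (L 0 0) := by
  ext i j
  fin_cases i <;> fin_cases j <;>
    simp [Matrix.mul_apply, rmap, C1mat, D12mat, col2, rowVec]

theorem costMatrix_smPerturb_eq_add (g δ : Fin n → ℝ) (B₁ : Matrix (Fin n) (Fin nw) ℝ)
    (D₂₁ : Matrix (Fin 1) (Fin nw) ℝ) (D₁₁ : Matrix (Fin 2) (Fin nw) ℝ) (Θ : Response n 1 1) :
    costMatrix g B₁ D₂₁ D₁₁ (smPerturb δ Θ) = costMatrix g B₁ D₂₁ D₁₁ Θ +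
      (1 - (rmap (rowVec δ) * Θ.N) 0 0)⁻¹ • ((rmap (C1mat g) * Θ.N + rmap D12mat * Θ.L) *
        (rmap (rowVec δ) * (Θ.R * rmap B₁ + Θ.N * rmap D₂₁))) := by
  have hs : ∀ {m k} (c : TF) (M : TMat m k), sMulTF c M = c • M := fun _ _ => rfl
  simp only [costMatrix, smPerturb, hs, Matrix.add_mul, Matrix.mul_add, Matrix.smul_mul,
    Matrix.mul_smul, smul_add, Matrix.mul_assoc]
  abel

theorem costMatrix_eq_add (g g' : Fin n → ℝ) (B₁ : Matrix (Fin n) (Fin nw) ℝ)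
    (D₂₁ : Matrix (Fin 1) (Fin nw) ℝ) (D₁₁ : Matrix (Fin 2) (Fin nw) ℝ) (Θ : Response n 1 1) :
    costMatrix g B₁ D₂₁ D₁₁ Θ = costMatrix g' B₁ D₂₁ D₁₁ Θ +
      col2 1 0 * (rmap (rowVec (g - g')) * (Θ.R * rmap B₁ + Θ.N * rmap D₂₁)) := by
  simp only [costMatrix, rmap_C1mat, rmap_rowVec_sub, Matrix.add_mul, Matrix.mul_add,
    Matrix.sub_mul, Matrix.mul_sub, Matrix.mul_assoc]
  abel

/-- The Sherman–Morrison factor `(1 - δᵀÑ)⁻¹` cancels against `1 - δᵀÑ` hidden in `gᵀÑ`. -/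
theorem costMatrix_smPerturb (g g' : Fin n → ℝ) (B₁ : Matrix (Fin n) (Fin nw) ℝ)
    (D₂₁ : Matrix (Fin 1) (Fin nw) ℝ) (D₁₁ : Matrix (Fin 2) (Fin nw) ℝ) (Θ : Response n 1 1)
    (hc : 1 - (rmap (rowVec (g - g')) * Θ.N) 0 0 ≠ 0) :
    costMatrix g B₁ D₂₁ D₁₁ (smPerturb (g - g') Θ) = costMatrix g' B₁ D₂₁ D₁₁ Θ +
      (1 - (rmap (rowVec (g - g')) * Θ.N) 0 0)⁻¹ • (perfWeightMatrix g' Θ *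
        (rmap (rowVec (g - g')) * (Θ.R * rmap B₁ + Θ.N * rmap D₂₁))) := by
  have hV : rmap (C1mat g) * Θ.N + rmap D12mat * Θ.L = perfWeightMatrix g' Θ -
      (1 - (rmap (rowVec (g - g')) * Θ.N) 0 0) • col2 1 0 := by
    rw [rmap_C1mat_mul_add_rmap_D12mat_mul, rmap_rowVec_sub, perfWeightMatrix]
    ext i j
    fin_cases i <;> fin_cases j <;> simp [col2, Matrix.sub_mul]
  rw [costMatrix_smPerturb_eq_add, costMatrix_eq_add g g', hV, Matrix.sub_mul, smul_sub,
    Matrix.smul_mul, smul_smul, inv_mul_cancel₀ hc, one_smul]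
  abel

end CostIdentity

section Estimates

variable {z : ℂ}

theorem matRegularAt_costMatrix {n nw : ℕ} (g : Fin n → ℝ) (B₁ : Matrix (Fin n) (Fin nw) ℝ)
    (D₂₁ : Matrix (Fin 1) (Fin nw) ℝ) (D₁₁ : Matrix (Fin 2) (Fin nw) ℝ) {Θ : Response n 1 1}
    (hR : MatRegularAt Θ.R z) (hM : MatRegularAt Θ.M z) (hN : MatRegularAt Θ.N z)
    (hL : MatRegularAt Θ.L z) : MatRegularAt (costMatrix g B₁ D₂₁ D₁₁ Θ) z :=
  ((((matRegularAt_rmap _).mul hR).add ((matRegularAt_rmap _).mul hM)).mul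
    (matRegularAt_rmap _) |>.add ((((matRegularAt_rmap _).mul hN).add
    ((matRegularAt_rmap _).mul hL)).mul (matRegularAt_rmap _))).add (matRegularAt_rmap _)

theorem matRegularAt_perfWeightMatrix {n : ℕ} (g : Fin n → ℝ) {Θ : Response n 1 1}
    (hN : MatRegularAt Θ.N z) (hL : MatRegularAt Θ.L z) :
    MatRegularAt (perfWeightMatrix g Θ) z := by
  intro i j
  fin_cases i
  · exact regularAt_one.add (((matRegularAt_rmap _).mul hN) 0 0)
  · exact hL 0 0

theorem one_sub_mul_le_norm_evalTF_one_sub {n : ℕ} {N : TMat n 1} (hN : MatRegularAt N z)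
    (δ : Fin n → ℝ) :
    1 - euclNorm δ * ‖evalMat N z‖ ≤ ‖evalTF (1 - (rmap (rowVec δ) * N) 0 0) z‖ := by
  have hDN := (matRegularAt_rmap (rowVec δ)).mul hN
  rw [evalTF_sub regularAt_one (hDN 0 0), show evalTF 1 z = 1 by simp [evalTF]]
  have hw : ‖evalTF ((rmap (rowVec δ) * N) 0 0) z‖ ≤ euclNorm δ * ‖evalMat N z‖ := calc
    _ = ‖evalMat (rmap (rowVec δ) * N) z 0 0‖ := rfl
    _ ≤ ‖evalMat (rmap (rowVec δ) * N) z‖ := norm_entry_le_l2_opNorm _ 0 0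
    _ ≤ euclNorm δ * ‖evalMat N z‖ := by
      rw [evalMat_mul (matRegularAt_rmap _) hN, evalMat_rmap,
        ← l2_opNorm_rowVec_map_ofReal (𝕜 := ℂ) δ]
      exact Matrix.l2_opNorm_mul _ _
  linarith [norm_sub_norm_le (1 : ℂ) (evalTF ((rmap (rowVec δ) * N) 0 0) z), norm_one (α := ℂ)]

theorem norm_evalMat_add_inv_smul_le {m p q k : ℕ} {C : TMat m k} {W : TMat m p}
    {Φ : TMat q k} {c : TF} (D : Matrix (Fin p) (Fin q) ℝ) (hC : MatRegularAt C z)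
    (hW : MatRegularAt W z) (hΦ : MatRegularAt Φ z) (hc : RegularAt c z)
    (hc0 : evalTF c z ≠ 0) {α : ℝ} (hWc : ‖evalMat W z‖ ≤ α * ‖evalTF c z‖) :
    ‖evalMat (C + c⁻¹ • (W * (rmap D * Φ))) z‖ ≤
      ‖evalMat C z‖ + α * (‖D.map ((↑) : ℝ → ℂ)‖ * ‖evalMat Φ z‖) := by
  have hDΦ := (matRegularAt_rmap D).mul hΦ
  have hWDΦ := hW.mul hDΦ
  rw [evalMat_add hC (MatRegularAt.smul (regularAt_inv hc0) hWDΦ),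
    evalMat_smul (regularAt_inv hc0) hWDΦ, evalMat_mul hW hDΦ,
    evalMat_mul (matRegularAt_rmap D) hΦ, evalMat_rmap, evalTF_inv hc hc0]
  have hα : ‖evalTF c z‖⁻¹ * ‖evalMat W z‖ ≤ α :=
    (inv_mul_le_iff₀ (norm_pos_iff.2 hc0)).2 (hWc.trans_eq (mul_comm _ _))
  calc _ ≤ ‖evalMat C z‖ + ‖(evalTF c z)⁻¹ • (evalMat W z *
          (D.map ((↑) : ℝ → ℂ) * evalMat Φ z))‖ := norm_add_le _ _
    _ ≤ ‖evalMat C z‖ + ‖evalTF c z‖⁻¹ * (‖evalMat W z‖ *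
          (‖D.map ((↑) : ℝ → ℂ)‖ * ‖evalMat Φ z‖)) := by
      rw [norm_smul, norm_inv]
      gcongr
      exact (Matrix.l2_opNorm_mul _ _).trans (by gcongr; exact Matrix.l2_opNorm_mul _ _)
    _ ≤ _ := by
      rw [← mul_assoc]
      gcongr

theorem perfWeight_pos {n : ℕ} (g : Fin n → ℝ) {Θ : Response n 1 1}
    (hNsp : StrictlyProper Θ.N) (hN : MemRHinf Θ.N) (hL : MemRHinf Θ.L) :
    0 < perfWeight g Θ :=
  hinfNorm_pos (i := 0) (j := 0)
    (fun z hz => matRegularAt_perfWeightMatrix g (hN.matRegularAt z hz) (hL.matRegularAt z hz))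
    (hNsp.rmap_mul _ 0 0).one_add_ne_zero

theorem cost_smPerturb_le_Qval {n nw : ℕ} (g g' : Fin n → ℝ) (B₁ : Matrix (Fin n) (Fin nw) ℝ)
    (D₂₁ : Matrix (Fin 1) (Fin nw) ℝ) (D₁₁ : Matrix (Fin 2) (Fin nw) ℝ) {Θ : Response n 1 1}
    (hNsp : StrictlyProper Θ.N) (hR : MemRHinf Θ.R) (hM : MemRHinf Θ.M) (hN : MemRHinf Θ.N)
    (hL : MemRHinf Θ.L) {ε α : ℝ} (hδ : euclNorm (g - g') ≤ ε)
    (hβ : 0 < 1 - ε * hinfNorm Θ.N) (hW : perfWeight g' Θ ≤ α * (1 - ε * hinfNorm Θ.N)) :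
    cost g B₁ D₂₁ D₁₁ (smPerturb (g - g') Θ) ≤ Qval g' B₁ D₂₁ D₁₁ ε Θ α := by
  have hCreg z hz := matRegularAt_costMatrix g' B₁ D₂₁ D₁₁
    (hR.matRegularAt z hz) (hM.matRegularAt z hz) (hN.matRegularAt z hz) (hL.matRegularAt z hz)
  have hWreg z hz := matRegularAt_perfWeightMatrix g' (hN.matRegularAt z hz) (hL.matRegularAt z hz)
  have hΦreg z hz := ((hR.matRegularAt z hz).mul (matRegularAt_rmap B₁)).add
    ((hN.matRegularAt z hz).mul (matRegularAt_rmap D₂₁))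
  have hε : 0 ≤ ε := (Real.sqrt_nonneg _).trans hδ
  have hα : 0 ≤ α := nonneg_of_mul_nonneg_left ((perfWeight_pos g' hNsp hN hL).le.trans hW) hβ
  rw [cost_eq_hinfNorm_costMatrix, costMatrix_smPerturb g g' B₁ D₂₁ D₁₁ Θ
    (hNsp.rmap_mul _ 0 0).one_sub_ne_zero]
  refine hinfNorm_le fun z hz => ?_
  set c := 1 - (rmap (rowVec (g - g')) * Θ.N) 0 0
  have hc : 1 - ε * hinfNorm Θ.N ≤ ‖evalTF c z‖ := calc
    _ ≤ 1 - euclNorm (g - g') * ‖evalMat Θ.N z‖ := sub_le_sub_left (mul_le_mul hδ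
      (norm_evalMat_le_hinfNorm hN.matRegularAt hz) (norm_nonneg _) hε) 1
    _ ≤ _ := one_sub_mul_le_norm_evalTF_one_sub (hN.matRegularAt z hz) _
  have hWc : ‖evalMat (perfWeightMatrix g' Θ) z‖ ≤ α * ‖evalTF c z‖ := calc
    _ ≤ perfWeight g' Θ := norm_evalMat_le_hinfNorm hWreg hz
    _ ≤ α * (1 - ε * hinfNorm Θ.N) := hW
    _ ≤ _ := by gcongr
  calc _ ≤ _ := norm_evalMat_add_inv_smul_le _ (hCreg z hz) (hWreg z hz) (hΦreg z hz)
        (regularAt_one.sub (((matRegularAt_rmap _).mul (hN.matRegularAt z hz)) 0 0))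
        (norm_pos_iff.1 (hβ.trans_le hc)) hWc
    _ ≤ cost g' B₁ D₂₁ D₁₁ Θ + α * (ε * hinfNorm (Θ.R * rmap B₁ + Θ.N * rmap D₂₁)) := by
      gcongr
      · exact norm_evalMat_le_hinfNorm hCreg hz
      · exact (l2_opNorm_rowVec_map_ofReal (𝕜 := ℂ) _).le.trans hδ
      · exact norm_evalMat_le_hinfNorm hΦreg hz
    _ = Qval g' B₁ D₂₁ D₁₁ ε Θ α := by rw [Qval]; ring

end Estimates

end SLS

theorem statement_9_general (r nw : ℕ) (g gt : Fin (r - 1) → ℝ)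
    (B₁ : Matrix (Fin (r - 1)) (Fin nw) ℝ) (D₂₁ : Matrix (Fin 1) (Fin nw) ℝ)
    (D₁₁ : Matrix (Fin 2) (Fin nw) ℝ) (Θ : Response (r - 1) 1 1) (ε α : ℝ)
    (hsls : SLSConstraints (shiftMat (r - 1)) (e1 (r - 1)) (rowVec gt) Θ)
    (hδ : euclNorm (g - gt) ≤ ε)
    (hα : 0 < α)
    (hcon : ε * α * hinfNorm Θ.N + perfWeight gt Θ ≤ α) :
    cost g B₁ D₂₁ D₁₁ (smPerturb (g - gt) Θ) ≤ Qval gt B₁ D₂₁ D₁₁ ε Θ α := by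
  obtain ⟨-, -, -, -, -, -, hNsp, hR, hM, hN, hL⟩ := hsls
  have hW := perfWeight_pos gt hNsp hN hL
  have hβ : 0 < 1 - ε * hinfNorm Θ.N := by nlinarith
  exact cost_smPerturb_le_Qval g gt B₁ D₂₁ D₁₁ hNsp hR hM hN hL hδ hβ (by linarith)

/-- if `Θ̃` satisfies the SLS constraints for `(Z, e₁, g̃ᵀ)`, `‖δ‖₂ ≤ ε`
with `δ = g − g̃` and `ε > 0`, and `α > 0` satisfies `εα‖Ñ‖ + ‖[1 + g̃ᵀÑ; L̃]‖ ≤ α`,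
then the perturbed response satisfies `J(g, Θ̂) ≤ J(g̃, Θ̃) + εα‖R̃B₁ + ÑD₂₁‖ = Q(g̃, Θ̃, α)`. -/
theorem statement_9 (r nw : ℕ) (g gt : Fin (r - 1) → ℝ)
    (B₁ : Matrix (Fin (r - 1)) (Fin nw) ℝ) (D₂₁ : Matrix (Fin 1) (Fin nw) ℝ)
    (D₁₁ : Matrix (Fin 2) (Fin nw) ℝ) (Θ : Response (r - 1) 1 1) (ε α : ℝ)
    (hsls : SLSConstraints (shiftMat (r - 1)) (e1 (r - 1)) (rowVec gt) Θ)
    (hε : 0 < ε)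
    (hδ : euclNorm (g - gt) ≤ ε)
    (hα : 0 < α)
    (hcon : ε * α * hinfNorm Θ.N + perfWeight gt Θ ≤ α) :
    cost g B₁ D₂₁ D₁₁ (smPerturb (g - gt) Θ) ≤ Qval gt B₁ D₂₁ D₁₁ ε Θ α :=
  statement_9_general r nw g gt B₁ D₂₁ D₁₁ Θ ε α hsls hδ hα hcon
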